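/- The Jaccard distance 1 − |A∩B|/|A∪B| is a metric on nonempty finite subsets of a fixed finite set: it is nonnegative, symmetric, zero iff A = B, and satisfies the triangle inequality. -/

import Mathlib

noncomputable def jaccardDist (A B : Finset ℕ) : ℝ :=
  1 - ((A ∩ B).card : ℝ) / (A ∪ B).card

/-!
Write `d(A, B) = |A ∆ B| / |A ∪ B|`. Adding the elements of `B` outside `A ∪ C` to both the
numerator and the denominator of `d(A, C)` can only increase it, and turns the denominator into
`|A ∪ B ∪ C|`. The new numerator is at most `|A ∆ B| + |B ∆ C|`, since `A ∆ C ⊆ A ∆ B ∪ B ∆ C`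
and `B \ (A ∪ C)` lies in `A ∆ B` outside `A ∆ C`. Shrinking the common denominator back to
`|A ∪ B|` and `|B ∪ C|` gives `d(A, B) + d(B, C)`.
-/

open Finset
open scoped symmDiff

lemma div_le_add_div_add {K : Type*} [Field K] [LinearOrder K] [IsStrictOrderedRing K]
    {x y z : K} (hx : 0 ≤ x) (hxy : x ≤ y) (hz : 0 ≤ z) : x / y ≤ (x + z) / (y + z) := by
  rcases hxy.eq_or_lt with rfl | hlt
  · rcases hx.eq_or_lt with rfl | hpos
    · simp only [zero_div, zero_add]
      exact div_nonneg hz hz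
    · rw [div_self hpos.ne', div_self (by positivity)]
  · have hy : 0 < y := hx.trans_lt hlt
    rw [div_le_div_iff₀ hy (by positivity)]
    nlinarith

namespace Finset

variable {α : Type*} [DecidableEq α]

lemma card_symmDiff_add_card_sdiff_union_le (A B C : Finset α) :
    #(A ∆ C) + #(B \ (A ∪ C)) ≤ #(A ∆ B) + #(B ∆ C) := by
  have hdisj : Disjoint (A ∆ C) (B \ (A ∪ C)) :=
    disjoint_sdiff.mono_left symmDiff_le_sup
  have hsub : A ∆ C ∪ B \ (A ∪ C) ⊆ A ∆ B ∪ B ∆ C := by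
    refine union_subset (symmDiff_triangle A B C) fun x hx => ?_
    simp only [mem_sdiff, mem_union, not_or] at hx
    exact mem_union_left _ (mem_symmDiff.2 (Or.inr ⟨hx.1, hx.2.1⟩))
  rw [← card_union_of_disjoint hdisj]
  exact (card_le_card hsub).trans (card_union_le _ _)

lemma card_symmDiff_div_le_of_union_subset {A B U : Finset α} (h : A ∪ B ⊆ U) :
    (#(A ∆ B) : ℝ) / #U ≤ #(A ∆ B) / #(A ∪ B) := by
  rcases (#(A ∆ B)).eq_zero_or_pos with h0 | hpos
  · simp [h0]
  · have hle : #(A ∆ B) ≤ #(A ∪ B) := card_le_card symmDiff_le_sup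
    exact div_le_div_of_nonneg_left (Nat.cast_nonneg _)
      (by exact_mod_cast hpos.trans_le hle) (by exact_mod_cast card_le_card h)

theorem card_symmDiff_div_card_union_triangle (A B C : Finset α) :
    (#(A ∆ C) : ℝ) / #(A ∪ C) ≤ #(A ∆ B) / #(A ∪ B) + #(B ∆ C) / #(B ∪ C) := by
  have hunion : #(A ∪ C) + #(B \ (A ∪ C)) = #(A ∪ B ∪ C) := by
    rw [add_comm, card_sdiff_add_card, union_comm, union_right_comm]
  have hkey : ((#(A ∆ C) + #(B \ (A ∪ C)) : ℕ) : ℝ) ≤ #(A ∆ B) + #(B ∆ C) := by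
    exact_mod_cast card_symmDiff_add_card_sdiff_union_le A B C
  calc (#(A ∆ C) : ℝ) / #(A ∪ C)
      ≤ (#(A ∆ C) + #(B \ (A ∪ C)) : ℝ) / (#(A ∪ C) + #(B \ (A ∪ C))) :=
        div_le_add_div_add (Nat.cast_nonneg _)
          (by exact_mod_cast card_le_card symmDiff_le_sup) (Nat.cast_nonneg _)
    _ ≤ (#(A ∆ B) + #(B ∆ C) : ℝ) / #(A ∪ B ∪ C) := by
        rw [← Nat.cast_add, ← Nat.cast_add, hunion]
        exact div_le_div_of_nonneg_right hkey (Nat.cast_nonneg _)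
    _ = #(A ∆ B) / #(A ∪ B ∪ C) + #(B ∆ C) / #(A ∪ B ∪ C) := add_div _ _ _
    _ ≤ #(A ∆ B) / #(A ∪ B) + #(B ∆ C) / #(B ∪ C) :=
        add_le_add (card_symmDiff_div_le_of_union_subset subset_union_left)
          (card_symmDiff_div_le_of_union_subset (union_subset_union_left subset_union_right))

end Finset

lemma jaccardDist_eq_card_symmDiff_div {A B : Finset ℕ} (h : (A ∪ B).Nonempty) :
    jaccardDist A B = #(A ∆ B) / #(A ∪ B) := by
  have hpos : (0 : ℝ) < #(A ∪ B) := by exact_mod_cast h.card_pos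
  rw [jaccardDist, symmDiff_eq_sup_sdiff_inf, sup_eq_union, inf_eq_inter,
    card_sdiff_of_subset inter_subset_union,
    Nat.cast_sub (card_le_card inter_subset_union)]
  field_simp

lemma jaccardDist_nonneg (A B : Finset ℕ) : 0 ≤ jaccardDist A B :=
  sub_nonneg.2 (div_le_one_of_le₀ (by exact_mod_cast card_le_card inter_subset_union)
    (Nat.cast_nonneg _))

lemma jaccardDist_comm (A B : Finset ℕ) : jaccardDist A B = jaccardDist B A := by
  rw [jaccardDist, jaccardDist, inter_comm, union_comm]

lemma jaccardDist_eq_zero_iff {A B : Finset ℕ} (h : (A ∪ B).Nonempty) :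
    jaccardDist A B = 0 ↔ A = B := by
  have hne : (#(A ∪ B) : ℝ) ≠ 0 := by exact_mod_cast h.card_pos.ne'
  rw [jaccardDist_eq_card_symmDiff_div h, div_eq_zero_iff, or_iff_left hne, Nat.cast_eq_zero,
    card_eq_zero, ← bot_eq_empty, symmDiff_eq_bot]

/-- The Jaccard distance is a metric on nonempty finite sets: nonnegative,
symmetric, zero iff equal, and satisfies the triangle inequality. -/
theorem jaccard_dist_is_metric :
    (∀ A B : Finset ℕ, A.Nonempty → B.Nonempty → 0 ≤ jaccardDist A B) ∧
    (∀ A B : Finset ℕ, jaccardDist A B = jaccardDist B A) ∧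
    (∀ A B : Finset ℕ, A.Nonempty → B.Nonempty →
      (jaccardDist A B = 0 ↔ A = B)) ∧
    (∀ A B C : Finset ℕ, A.Nonempty → B.Nonempty → C.Nonempty →
      jaccardDist A C ≤ jaccardDist A B + jaccardDist B C) := by
  refine ⟨fun A B _ _ => jaccardDist_nonneg A B, jaccardDist_comm,
    fun A B hA _ => jaccardDist_eq_zero_iff (hA.mono subset_union_left), ?_⟩
  intro A B C hA hB _
  rw [jaccardDist_eq_card_symmDiff_div (hA.mono subset_union_left),
    jaccardDist_eq_card_symmDiff_div (hA.mono subset_union_left),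
    jaccardDist_eq_card_symmDiff_div (hB.mono subset_union_left)]
  exact card_symmDiff_div_card_union_triangle A B C
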